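/- The Hénon transformation a_i = -(1/2)√(u_{2i} u_{2i-1}) (i = 1,…,n-1), b_i = (1/2)(u_{2i-1} + u_{2i-2}) (i = 1,…,n), with u_0 = u_{2n} = 0, maps solutions of the KM system u̇_i = u_i(u_{i+1} - u_{i-1}) on the positive orthant of ℝ^{2n-1} to solutions of the Toda lattice equations ȧ_i = a_i(b_{i+1} - b_i), ḃ_i = 2(a_i² - a_{i-1}²) (with a_0 = a_n = 0). -/

import Mathlib

/-!
Since `u₀ = u_{2n} = 0`, the KM equation holds trivially at the boundary indices `0` and `2n`,
so all indices `0, …, 2n` can be treated alike. Then `4 aᵢ² = u_{2i} u_{2i-1}` for `0 ≤ i ≤ n`,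
and `ḃᵢ = ½ (u_{2i} u_{2i-1} - u_{2i-2} u_{2i-3})` is a telescoping sum of the KM equations for
`u_{2i-1}` and `u_{2i-2}`. For the `a`-equation, the logarithmic derivative of `√(u_{2i} u_{2i-1})`
is half the sum of the rates `u_{2i+1} - u_{2i-1}` and `u_{2i} - u_{2i-2}`, which is `b_{i+1} - bᵢ`.
-/

open Finset

theorem HasDerivAt.sqrt_mul_of_rates {f g : ℝ → ℝ} {p q t : ℝ}
    (hf : HasDerivAt f (f t * p) t) (hg : HasDerivAt g (g t * q) t) (hfg : 0 < f t * g t) :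
    HasDerivAt (fun s => √(f s * g s)) (√(f t * g t) * ((p + q) / 2)) t := by
  refine ((hf.mul hg).sqrt hfg.ne').congr_deriv ?_
  have hsq : √(f t * g t) * √(f t * g t) = f t * g t := Real.mul_self_sqrt hfg.le
  have hne : 2 * √(f t * g t) ≠ 0 := by positivity
  rw [Pi.mul_apply, div_eq_iff hne]
  linear_combination -(p + q) * hsq

noncomputable def henonA (n : ℕ) (u : ℝ → ℕ → ℝ) (i : ℕ) (t : ℝ) : ℝ :=
  if 1 ≤ i ∧ i ≤ n - 1 then -(1 / 2) * √(u t (2 * i) * u t (2 * i - 1)) else 0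

noncomputable def henonB (u : ℝ → ℕ → ℝ) (i : ℕ) (t : ℝ) : ℝ :=
  (1 / 2) * (u t (2 * i - 1) + u t (2 * i - 2))

section

variable {n : ℕ} {u : ℝ → ℕ → ℝ}

theorem km_hasDerivAt_of_le_two_mul (hu0 : ∀ t, u t 0 = 0) (hu2n : ∀ t, u t (2 * n) = 0)
    (hode : ∀ t : ℝ, ∀ i ∈ Icc 1 (2 * n - 1),
      HasDerivAt (fun s => u s i) (u t i * (u t (i + 1) - u t (i - 1))) t)
    (t : ℝ) {j : ℕ} (hj : j ≤ 2 * n) :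
    HasDerivAt (fun s => u s j) (u t j * (u t (j + 1) - u t (j - 1))) t := by
  by_cases hint : j ∈ Icc 1 (2 * n - 1)
  · exact hode t j hint
  have hzero : ∀ s, u s j = 0 := by
    rw [mem_Icc] at hint
    obtain rfl | rfl : j = 0 ∨ j = 2 * n := by omega
    exacts [hu0, hu2n]
  simpa [hzero] using hasDerivAt_const t (0 : ℝ)

theorem henonA_sq (hpos : ∀ t : ℝ, ∀ i ∈ Icc 1 (2 * n - 1), 0 < u t i)
    (hu0 : ∀ t, u t 0 = 0) (hu2n : ∀ t, u t (2 * n) = 0) (t : ℝ) {i : ℕ} (hi : i ≤ n) :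
    henonA n u i t ^ 2 = u t (2 * i) * u t (2 * i - 1) / 4 := by
  by_cases hint : 1 ≤ i ∧ i ≤ n - 1
  · have hprod : 0 ≤ u t (2 * i) * u t (2 * i - 1) :=
      (mul_pos (hpos t _ (by rw [mem_Icc]; omega)) (hpos t _ (by rw [mem_Icc]; omega))).le
    rw [henonA, if_pos hint, mul_pow, Real.sq_sqrt hprod]
    ring
  · obtain rfl | rfl : i = 0 ∨ i = n := by omega
    · simp [henonA, hu0]
    · simp [henonA, hint, hu2n]

theorem henonA_hasDerivAt (hpos : ∀ t : ℝ, ∀ i ∈ Icc 1 (2 * n - 1), 0 < u t i)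
    (hu0 : ∀ t, u t 0 = 0) (hu2n : ∀ t, u t (2 * n) = 0)
    (hode : ∀ t : ℝ, ∀ i ∈ Icc 1 (2 * n - 1),
      HasDerivAt (fun s => u s i) (u t i * (u t (i + 1) - u t (i - 1))) t)
    (t : ℝ) {i : ℕ} (hi : 1 ≤ i ∧ i ≤ n - 1) :
    HasDerivAt (henonA n u i) (henonA n u i t * (henonB u (i + 1) t - henonB u i t)) t := by
  have hodd := km_hasDerivAt_of_le_two_mul hu0 hu2n hode t (j := 2 * i - 1) (by omega)
  have heven := km_hasDerivAt_of_le_two_mul hu0 hu2n hode t (j := 2 * i) (by omega)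
  rw [show 2 * i - 1 + 1 = 2 * i by omega, show 2 * i - 1 - 1 = 2 * i - 2 by omega] at hodd
  have hprod : 0 < u t (2 * i) * u t (2 * i - 1) :=
    mul_pos (hpos t _ (by rw [mem_Icc]; omega)) (hpos t _ (by rw [mem_Icc]; omega))
  have hfun : henonA n u i = fun s => -(1 / 2) * √(u s (2 * i) * u s (2 * i - 1)) :=
    funext fun s => if_pos hi
  rw [hfun]
  refine ((heven.sqrt_mul_of_rates hodd hprod).const_mul _).congr_deriv ?_
  rw [henonB, henonB, show 2 * (i + 1) - 1 = 2 * i + 1 by omega,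
    show 2 * (i + 1) - 2 = 2 * i by omega]
  ring

theorem henonB_hasDerivAt (hpos : ∀ t : ℝ, ∀ i ∈ Icc 1 (2 * n - 1), 0 < u t i)
    (hu0 : ∀ t, u t 0 = 0) (hu2n : ∀ t, u t (2 * n) = 0)
    (hode : ∀ t : ℝ, ∀ i ∈ Icc 1 (2 * n - 1),
      HasDerivAt (fun s => u s i) (u t i * (u t (i + 1) - u t (i - 1))) t)
    (t : ℝ) {i : ℕ} (hi : 1 ≤ i ∧ i ≤ n) :
    HasDerivAt (henonB u i) (2 * (henonA n u i t ^ 2 - henonA n u (i - 1) t ^ 2)) t := by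
  have hodd := km_hasDerivAt_of_le_two_mul hu0 hu2n hode t (j := 2 * i - 1) (by omega)
  have heven := km_hasDerivAt_of_le_two_mul hu0 hu2n hode t (j := 2 * i - 2) (by omega)
  rw [show 2 * i - 1 + 1 = 2 * i by omega, show 2 * i - 1 - 1 = 2 * i - 2 by omega] at hodd
  rw [show 2 * i - 2 + 1 = 2 * i - 1 by omega] at heven
  refine ((hodd.add heven).const_mul (1 / 2)).congr_deriv ?_
  rw [henonA_sq hpos hu0 hu2n t hi.2, henonA_sq hpos hu0 hu2n t (by omega : i - 1 ≤ n),
    show 2 * (i - 1) = 2 * i - 2 by omega]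
  ring

end

/-- The Hénon transformation `aᵢ = -(1/2)√(u_{2i}u_{2i-1})` (`i = 1,…,n-1`),
`bᵢ = (1/2)(u_{2i-1} + u_{2i-2})` (`i = 1,…,n`), with `u₀ = u_{2n} = 0`, maps
solutions of the KM system on the positive orthant of `ℝ^{2n-1}` to solutions of
the Toda lattice `ȧᵢ = aᵢ(bᵢ₊₁ - bᵢ)`, `ḃᵢ = 2(aᵢ² - aᵢ₋₁²)` (`a₀ = aₙ = 0`). -/
theorem henon_maps_km_to_toda (n : ℕ) (u : ℝ → ℕ → ℝ)
    (hpos : ∀ t : ℝ, ∀ i ∈ Finset.Icc 1 (2 * n - 1), 0 < u t i)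
    (hu0 : ∀ t, u t 0 = 0) (hu2n : ∀ t, u t (2 * n) = 0)
    (hode : ∀ t : ℝ, ∀ i ∈ Finset.Icc 1 (2 * n - 1),
      HasDerivAt (fun s => u s i) (u t i * (u t (i + 1) - u t (i - 1))) t)
    (a : ℕ → ℝ → ℝ)
    (ha : ∀ i t, a i t = if 1 ≤ i ∧ i ≤ n - 1
      then -(1 / 2) * Real.sqrt (u t (2 * i) * u t (2 * i - 1)) else 0)
    (b : ℕ → ℝ → ℝ)
    (hb : ∀ i t, b i t = (1 / 2) * (u t (2 * i - 1) + u t (2 * i - 2))) :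
    (∀ t : ℝ, ∀ i ∈ Finset.Icc 1 (n - 1),
        HasDerivAt (a i) (a i t * (b (i + 1) t - b i t)) t) ∧
    (∀ t : ℝ, ∀ i ∈ Finset.Icc 1 n,
        HasDerivAt (b i) (2 * ((a i t) ^ 2 - (a (i - 1) t) ^ 2)) t) := by
  obtain rfl : a = henonA n u := funext₂ ha
  obtain rfl : b = henonB u := funext₂ hb
  exact ⟨fun t i hi => henonA_hasDerivAt hpos hu0 hu2n hode t (mem_Icc.mp hi),
    fun t i hi => henonB_hasDerivAt hpos hu0 hu2n hode t (mem_Icc.mp hi)⟩
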